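/- Fix λ ∈ ℂ and define the ℂ-linear operators on Polynomial ℂ: T₁(p) = p′ (the formal derivative), T₂(p) = 2·X·p′ − λ·p, T₃(p) = X²·p′ − λ·X·p. Then there exists a ℂ-subspace V of Polynomial ℂ with V ≠ 0, V finite-dimensional, and V invariant under T₁, T₂, and T₃, if and only if λ is a natural number (λ lies in the image of ℕ in ℂ). Moreover, when λ = n for n ∈ ℕ, the span of 1, X, …, Xⁿ is such an invariant subspace. -/

import Mathlib

/-!
`T₁` and `T₂` never raise the degree, while `T₃ = X²∂ − λX` sends a polynomial with top term
`a Xᵈ` to one whose `X^{d+1}`-coefficient is `(d − λ) a`. A nonzero finite-dimensional subspace has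
elements of maximal degree `d`, so invariance under `T₃` forces `λ = d`. Conversely, when `λ = n`
that coefficient vanishes in degree `n`, so all three operators preserve `degree ≤ n`.
-/

open Polynomial

/-- `T₁(p) = p′`. -/
noncomputable def qcT1 (p : Polynomial ℂ) : Polynomial ℂ := derivative p

/-- `T₂(p) = 2·X·p′ − λ·p`. -/
noncomputable def qcT2 (lam : ℂ) (p : Polynomial ℂ) : Polynomial ℂ :=
  2 * X * derivative p - C lam * p

/-- `T₃(p) = X²·p′ − λ·X·p`. -/
noncomputable def qcT3 (lam : ℂ) (p : Polynomial ℂ) : Polynomial ℂ :=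
  X ^ 2 * derivative p - C lam * X * p

namespace Polynomial

variable {R : Type*} [Semiring R]

theorem mem_degreeLE_iff_coeff_eq_zero {n : ℕ} {p : R[X]} :
    p ∈ degreeLE R n ↔ ∀ m : ℕ, n < m → p.coeff m = 0 := by
  simp only [mem_degreeLE, degree_le_iff_coeff_zero, Nat.cast_lt]

theorem span_X_pow_le_eq_degreeLE (n : ℕ) :
    Submodule.span R {q : R[X] | ∃ i : ℕ, i ≤ n ∧ q = X ^ i} = degreeLE R n := by
  classical
  rw [degreeLE_eq_span_X_pow]
  congr 1
  ext q
  simp [eq_comm]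

instance (n : ℕ) : Module.Finite R (degreeLE R n) :=
  degreeLT_succ_eq_degreeLE (R := R) (n := n) ▸ inferInstance

theorem degreeLE_natCast_ne_bot [Nontrivial R] (n : ℕ) : degreeLE R n ≠ ⊥ :=
  (Submodule.ne_bot_iff _).mpr
    ⟨1, mem_degreeLE.mpr (degree_one_le.trans (WithBot.coe_le_coe.mpr n.zero_le)), one_ne_zero⟩

theorem exists_le_degreeLE_of_fg {V : Submodule R R[X]} (hV : V.FG) :
    ∃ N : ℕ, V ≤ degreeLE R N := by
  obtain ⟨s, hs, rfl⟩ := Submodule.fg_def.mp hV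
  exact span_le_degreeLE_of_finite hs

theorem exists_mem_forall_natDegree_le {V : Submodule R R[X]} (hV : V ≠ ⊥) {N : ℕ}
    (hN : V ≤ degreeLE R N) :
    ∃ p ∈ V, p ≠ 0 ∧ ∀ q ∈ V, q.natDegree ≤ p.natDegree := by
  set S : Set ℕ := {d | ∃ p ∈ V, p ≠ 0 ∧ p.natDegree = d}
  have hS_bdd : BddAbove S := ⟨N, by
    rintro _ ⟨p, hp, -, rfl⟩
    exact natDegree_le_iff_degree_le.mpr (mem_degreeLE.mp (hN hp))⟩
  obtain ⟨p₀, hp₀, hp₀_ne⟩ := (Submodule.ne_bot_iff V).mp hV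
  obtain ⟨p, hp, hp_ne, hp_deg⟩ := Nat.sSup_mem (s := S) ⟨_, p₀, hp₀, hp₀_ne, rfl⟩ hS_bdd
  refine ⟨p, hp, hp_ne, fun q hq => ?_⟩
  rcases eq_or_ne q 0 with rfl | hq_ne
  · simp
  · exact hp_deg ▸ le_csSup hS_bdd ⟨q, hq, hq_ne, rfl⟩

end Polynomial

theorem coeff_qcT1 (p : ℂ[X]) (d : ℕ) : (qcT1 p).coeff d = p.coeff (d + 1) * (d + 1) := by
  simp [qcT1, coeff_derivative]

theorem coeff_qcT2 (lam : ℂ) (p : ℂ[X]) (d : ℕ) :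
    (qcT2 lam p).coeff d = (2 * d - lam) * p.coeff d := by
  rcases d with _ | d
  · simp [qcT2, mul_assoc]
  · simp only [qcT2, coeff_sub, coeff_C_mul, mul_assoc, coeff_ofNat_mul, coeff_X_mul,
      coeff_derivative]
    push_cast
    ring

theorem coeff_qcT3_succ (lam : ℂ) (p : ℂ[X]) (d : ℕ) :
    (qcT3 lam p).coeff (d + 1) = (d - lam) * p.coeff d := by
  rcases d with _ | d
  · simp [qcT3, pow_two, mul_assoc]
  · simp only [qcT3, coeff_sub, pow_two, mul_assoc, coeff_X_mul, coeff_C_mul, coeff_derivative]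
    push_cast
    ring

theorem qcT1_mem_degreeLE {n : ℕ} {p : ℂ[X]} (hp : p ∈ degreeLE ℂ n) :
    qcT1 p ∈ degreeLE ℂ n := by
  rw [mem_degreeLE_iff_coeff_eq_zero] at hp ⊢
  intro m hm
  rw [coeff_qcT1, hp (m + 1) (by omega), zero_mul]

theorem qcT2_mem_degreeLE (lam : ℂ) {n : ℕ} {p : ℂ[X]} (hp : p ∈ degreeLE ℂ n) :
    qcT2 lam p ∈ degreeLE ℂ n := by
  rw [mem_degreeLE_iff_coeff_eq_zero] at hp ⊢
  intro m hm
  rw [coeff_qcT2, hp m hm, mul_zero]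

theorem qcT3_natCast_mem_degreeLE {n : ℕ} {p : ℂ[X]} (hp : p ∈ degreeLE ℂ n) :
    qcT3 n p ∈ degreeLE ℂ n := by
  rw [mem_degreeLE_iff_coeff_eq_zero] at hp ⊢
  rintro (_ | d) hd
  · omega
  rw [coeff_qcT3_succ]
  rcases (Nat.lt_succ_iff.mp hd).eq_or_lt with rfl | hlt
  · rw [sub_self, zero_mul]
  · rw [hp d hlt, mul_zero]

theorem exists_natCast_eq_of_forall_qcT3_mem (lam : ℂ) {V : Submodule ℂ ℂ[X]} (hV : V ≠ ⊥)
    [FiniteDimensional ℂ V] (hV₃ : ∀ p ∈ V, qcT3 lam p ∈ V) : ∃ n : ℕ, lam = n := by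
  obtain ⟨N, hN⟩ := exists_le_degreeLE_of_fg (Module.Finite.iff_fg.mp ‹FiniteDimensional ℂ V›)
  obtain ⟨p, hp, hp_ne, hp_max⟩ := exists_mem_forall_natDegree_le hV hN
  refine ⟨p.natDegree, (sub_eq_zero.mp ?_).symm⟩
  have htop : (qcT3 lam p).coeff (p.natDegree + 1) = 0 :=
    coeff_eq_zero_of_natDegree_lt (Nat.lt_succ_of_le (hp_max _ (hV₃ p hp)))
  rw [coeff_qcT3_succ, coeff_natDegree] at htop
  exact (mul_eq_zero.mp htop).resolve_right (leadingCoeff_ne_zero.mpr hp_ne)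

/-- The prototypical `sl₂` realization `∂, 2z∂ − λ, z²∂ − λz` admits a nonzero
finite-dimensional invariant subspace of polynomials if and only if `λ` is a natural
number; moreover when `λ = n` the span of `1, X, …, Xⁿ` is such a subspace. -/
theorem sl2_invariant_subspace_iff_nat (lam : ℂ) :
    ((∃ V : Submodule ℂ (Polynomial ℂ), V ≠ ⊥ ∧ FiniteDimensional ℂ V ∧
        ∀ p ∈ V, qcT1 p ∈ V ∧ qcT2 lam p ∈ V ∧ qcT3 lam p ∈ V) ↔
      ∃ n : ℕ, lam = (n : ℂ)) ∧
    ∀ n : ℕ, lam = (n : ℂ) →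
      ∀ p ∈ Submodule.span ℂ {q : Polynomial ℂ | ∃ i : ℕ, i ≤ n ∧ q = X ^ i},
        qcT1 p ∈ Submodule.span ℂ {q : Polynomial ℂ | ∃ i : ℕ, i ≤ n ∧ q = X ^ i} ∧
        qcT2 lam p ∈ Submodule.span ℂ {q : Polynomial ℂ | ∃ i : ℕ, i ≤ n ∧ q = X ^ i} ∧
        qcT3 lam p ∈ Submodule.span ℂ {q : Polynomial ℂ | ∃ i : ℕ, i ≤ n ∧ q = X ^ i} := by
  have hinv : ∀ n : ℕ, lam = n → ∀ p ∈ degreeLE ℂ n,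
      qcT1 p ∈ degreeLE ℂ n ∧ qcT2 lam p ∈ degreeLE ℂ n ∧ qcT3 lam p ∈ degreeLE ℂ n := by
    rintro n rfl p hp
    exact ⟨qcT1_mem_degreeLE hp, qcT2_mem_degreeLE _ hp, qcT3_natCast_mem_degreeLE hp⟩
  simp only [span_X_pow_le_eq_degreeLE]
  refine ⟨⟨?_, ?_⟩, hinv⟩
  · rintro ⟨V, hV, _, hV_inv⟩
    exact exists_natCast_eq_of_forall_qcT3_mem lam hV fun p hp => (hV_inv p hp).2.2
  · rintro ⟨n, hn⟩
    exact ⟨degreeLE ℂ n, degreeLE_natCast_ne_bot n, inferInstance, hinv n hn⟩
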